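/- arXiv:1411.2423 — 4 statements merged into one kernel-verified Lean document; each statement's English description precedes it below -/
import Mathlib

section
/- Fix an integer q ≥ 2 and a real number b > 0. The set of torpedo functions on [0,b] (of arbitrary radius δ > 0) is convex: if η₁ and η₂ are torpedo functions on [0,b] (of radii δ₁ = η₁(b) and δ₂ = η₂(b) respectively) and t ∈ [0,1], then the function t·η₁ + (1−t)·η₂ is again a torpedo function on [0,b], of radius t·δ₁ + (1−t)·δ₂. -/
/-- A `δ`-torpedo function on `[0,b]` (with `δ = η b`), for the parameter `q ≥ 2`:
a smooth function `η : ℝ → ℝ` with `η 0 = 0`, `η' 0 = 1`, all even-order derivatives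
of order `≥ 2` vanishing at `0`, `η > 0` on `(0,b]`, all derivatives of order `≥ 1`
vanishing at `b`, `η'' ≤ 0` on `[0,b]`, `η'' < 0` near (but not at) `0`, and the
scalar curvature `R_η(r) = -2q η''(r)/η(r) + q(q-1)(1-η'(r)²)/η(r)²` of the warped
product metric `dr² + η(r)² ds_q²` positive on `(0,b]`. -/
def IsTorpedoFunction (q : ℕ) (b : ℝ) (η : ℝ → ℝ) : Prop :=
  ContDiff ℝ (⊤ : ℕ∞) η ∧
  η 0 = 0 ∧
  deriv η 0 = 1 ∧
  (∀ k : ℕ, 1 ≤ k → iteratedDeriv (2 * k) η 0 = 0) ∧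
  (∀ r ∈ Set.Ioc (0 : ℝ) b, 0 < η r) ∧
  (∀ k : ℕ, 1 ≤ k → iteratedDeriv k η b = 0) ∧
  (∀ r ∈ Set.Icc (0 : ℝ) b, deriv (deriv η) r ≤ 0) ∧
  (∃ ε ∈ Set.Ioo (0 : ℝ) b, ∀ r ∈ Set.Ioo (0 : ℝ) ε, deriv (deriv η) r < 0) ∧
  (∀ r ∈ Set.Ioc (0 : ℝ) b,
    0 < -2 * (q : ℝ) * deriv (deriv η) r / η r
        + (q : ℝ) * ((q : ℝ) - 1) * (1 - (deriv η r) ^ 2) / (η r) ^ 2)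

/-!
Every defining condition except the curvature one is a sign or value condition on `η` or one
of its derivatives at a point, so, differentiation being linear, it cuts out a convex set.
For the curvature, clear the denominator: `N = -2q η'' η + q(q-1)(1 - η'²)` is quadratic in `η`,
and with `1 = (t + s)²` one gets `N(tη₁ + sη₂) = t² N(η₁) + s² N(η₂) + t s C`, where
`C = -2q (η₁'' η₂ + η₂'' η₁) + 2q(q-1)(1 - η₁' η₂') ≥ 0` because `η'' ≤ 0`, `η > 0`, and
`0 ≤ η' ≤ 1` (concavity makes `η'` decrease from `η'(0) = 1` to `η'(b) = 0`).
-/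

open Set

/-- `R_η(r)` written in terms of `w = η''(r)`, `u = η'(r)` and `v = η(r)`. -/
noncomputable def warpedCurvature (q : ℕ) (w u v : ℝ) : ℝ :=
  -2 * (q : ℝ) * w / v + (q : ℝ) * ((q : ℝ) - 1) * (1 - u ^ 2) / v ^ 2

theorem warpedCurvature_pos_iff {q : ℕ} {w u v : ℝ} (hv : 0 < v) :
    0 < warpedCurvature q w u v ↔ 0 < -2 * q * w * v + q * (q - 1) * (1 - u ^ 2) := by
  have hquot : warpedCurvature q w u v = (-2 * q * w * v + q * (q - 1) * (1 - u ^ 2)) / v ^ 2 := by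
    unfold warpedCurvature
    field_simp
  rw [hquot, div_pos_iff_of_pos_right (by positivity)]

theorem warpedCurvature_convex_pos {q : ℕ} {t s w₁ w₂ u₁ u₂ v₁ v₂ : ℝ}
    (ht : 0 ≤ t) (hs : 0 ≤ s) (hts : t + s = 1) (hw₁ : w₁ ≤ 0) (hw₂ : w₂ ≤ 0)
    (hu₁ : |u₁| ≤ 1) (hu₂ : |u₂| ≤ 1) (hv₁ : 0 < v₁) (hv₂ : 0 < v₂)
    (h₁ : 0 < warpedCurvature q w₁ u₁ v₁) (h₂ : 0 < warpedCurvature q w₂ u₂ v₂) :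
    0 < warpedCurvature q (t * w₁ + s * w₂) (t * u₁ + s * u₂) (t * v₁ + s * v₂) := by
  have hv : 0 < t * v₁ + s * v₂ := convex_Ioi (0 : ℝ) hv₁ hv₂ ht hs hts
  rw [warpedCurvature_pos_iff hv₁] at h₁
  rw [warpedCurvature_pos_iff hv₂] at h₂
  rw [warpedCurvature_pos_iff hv]
  have hq : (0 : ℝ) ≤ q * (q - 1) := by
    rcases Nat.eq_zero_or_pos q with rfl | hq
    · simp
    · exact mul_nonneg q.cast_nonneg (sub_nonneg.2 (Nat.one_le_cast.2 hq))
  have hu : u₁ * u₂ ≤ 1 := by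
    calc u₁ * u₂ ≤ |u₁| * |u₂| := (abs_mul u₁ u₂).symm ▸ le_abs_self _
      _ ≤ 1 := mul_le_one₀ hu₁ (abs_nonneg _) hu₂
  have hcross : 0 ≤ -2 * q * (w₁ * v₂ + w₂ * v₁) + 2 * (q * (q - 1)) * (1 - u₁ * u₂) := by
    have : w₁ * v₂ + w₂ * v₁ ≤ 0 := by nlinarith
    nlinarith [q.cast_nonneg (α := ℝ)]
  obtain rfl : s = 1 - t := by linarith
  have hdiag : 0 < t ^ 2 * (-2 * q * w₁ * v₁ + q * (q - 1) * (1 - u₁ ^ 2))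
      + (1 - t) ^ 2 * (-2 * q * w₂ * v₂ + q * (q - 1) * (1 - u₂ ^ 2)) := by
    rcases ht.eq_or_lt with rfl | ht
    · simpa using h₂
    · exact add_pos_of_pos_of_nonneg (by positivity) (by positivity)
  calc 0 < t ^ 2 * (-2 * q * w₁ * v₁ + q * (q - 1) * (1 - u₁ ^ 2))
        + (1 - t) ^ 2 * (-2 * q * w₂ * v₂ + q * (q - 1) * (1 - u₂ ^ 2))
        + t * (1 - t) * (-2 * q * (w₁ * v₂ + w₂ * v₁) + 2 * (q * (q - 1)) * (1 - u₁ * u₂)) :=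
        add_pos_of_pos_of_nonneg hdiag (mul_nonneg (mul_nonneg ht hs) hcross)
    _ = _ := by ring

theorem IsTorpedoFunction.deriv_mem_Icc {q : ℕ} {b : ℝ} {η : ℝ → ℝ}
    (hη : IsTorpedoFunction q b η) {r : ℝ} (hr : r ∈ Icc 0 b) : deriv η r ∈ Icc 0 1 := by
  obtain ⟨hsmooth, -, hd0, -, -, hdb, hconc, -⟩ := hη
  have hd : Differentiable ℝ (deriv η) :=
    (hsmooth.of_le (by norm_cast)).differentiable_deriv_two
  have hanti : AntitoneOn (deriv η) (Icc 0 b) :=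
    antitoneOn_of_deriv_nonpos (convex_Icc 0 b) hd.continuous.continuousOn hd.differentiableOn
      fun x hx => hconc x (interior_subset hx)
  have hdb1 : deriv η b = 0 := by simpa using hdb 1 le_rfl
  exact ⟨hdb1 ▸ hanti hr ⟨hr.1.trans hr.2, le_rfl⟩ hr.2,
    hd0 ▸ hanti ⟨le_rfl, hr.1.trans hr.2⟩ hr hr.1⟩

theorem iteratedDeriv_smul_add_smul {f g : ℝ → ℝ} (hf : ContDiff ℝ (⊤ : ℕ∞) f)
    (hg : ContDiff ℝ (⊤ : ℕ∞) g) (a b : ℝ) (n : ℕ) (x : ℝ) :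
    iteratedDeriv n (a • f + b • g) x = a * iteratedDeriv n f x + b * iteratedDeriv n g x := by
  have hn : (n : WithTop ℕ∞) ≤ (⊤ : ℕ∞) := by exact_mod_cast le_top
  rw [iteratedDeriv_add (f := a • f) (g := b • g) ((hf.const_smul a).of_le hn).contDiffAt
    ((hg.const_smul b).of_le hn).contDiffAt, iteratedDeriv_const_smul_field,
    iteratedDeriv_const_smul_field, smul_eq_mul, smul_eq_mul]

theorem convex_setOf_isTorpedoFunction (q : ℕ) (b : ℝ) :
    Convex ℝ {η : ℝ → ℝ | IsTorpedoFunction q b η} := by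
  intro η₁ hη₁ η₂ hη₂ t s ht hs hts
  have hu₁ (r : ℝ) (hr : r ∈ Icc 0 b) : |deriv η₁ r| ≤ 1 :=
    abs_le.2 ⟨by linarith [(hη₁.deriv_mem_Icc hr).1], (hη₁.deriv_mem_Icc hr).2⟩
  have hu₂ (r : ℝ) (hr : r ∈ Icc 0 b) : |deriv η₂ r| ≤ 1 :=
    abs_le.2 ⟨by linarith [(hη₂.deriv_mem_Icc hr).1], (hη₂.deriv_mem_Icc hr).2⟩
  obtain ⟨hsm₁, h0₁, hd0₁, hev₁, hpos₁, hdb₁, hconc₁, ⟨ε₁, hε₁, hneg₁⟩, hR₁⟩ := hη₁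
  obtain ⟨hsm₂, h0₂, hd0₂, hev₂, hpos₂, hdb₂, hconc₂, ⟨ε₂, hε₂, hneg₂⟩, hR₂⟩ := hη₂
  have hD := iteratedDeriv_smul_add_smul hsm₁ hsm₂ t s
  have hD1 : ∀ x, deriv (t • η₁ + s • η₂) x = t * deriv η₁ x + s * deriv η₂ x := by
    simpa using hD 1
  have hD2 : ∀ x, deriv (deriv (t • η₁ + s • η₂)) x
      = t * deriv (deriv η₁) x + s * deriv (deriv η₂) x := by
    simpa [iteratedDeriv_succ] using hD 2
  refine ⟨(hsm₁.const_smul t).add (hsm₂.const_smul s), ?_, ?_, ?_, ?_, ?_, ?_, ?_, ?_⟩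
  · simp [h0₁, h0₂]
  · simp [hD1, hd0₁, hd0₂, hts]
  · intro k hk
    simp [hD, hev₁ k hk, hev₂ k hk]
  · intro r hr
    exact convex_Ioi (0 : ℝ) (hpos₁ r hr) (hpos₂ r hr) ht hs hts
  · intro k hk
    simp [hD, hdb₁ k hk, hdb₂ k hk]
  · intro r hr
    rw [hD2]
    exact convex_Iic (0 : ℝ) (hconc₁ r hr) (hconc₂ r hr) ht hs hts
  · refine ⟨min ε₁ ε₂, ⟨lt_min hε₁.1 hε₂.1, (min_le_left _ _).trans_lt hε₁.2⟩, fun r hr => ?_⟩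
    rw [hD2]
    exact convex_Iio (0 : ℝ) (hneg₁ r ⟨hr.1, hr.2.trans_le (min_le_left _ _)⟩)
      (hneg₂ r ⟨hr.1, hr.2.trans_le (min_le_right _ _)⟩) ht hs hts
  · intro r hr
    have hrIcc : r ∈ Icc 0 b := Ioc_subset_Icc_self hr
    rw [hD1, hD2]
    exact warpedCurvature_convex_pos ht hs hts (hconc₁ r hrIcc) (hconc₂ r hrIcc)
      (hu₁ r hrIcc) (hu₂ r hrIcc) (hpos₁ r hr) (hpos₂ r hr) (hR₁ r hr) (hR₂ r hr)

theorem torpedo_functions_convex_general (q : ℕ) (b : ℝ)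
    (η₁ η₂ : ℝ → ℝ) (δ₁ δ₂ : ℝ)
    (hη₁ : IsTorpedoFunction q b η₁) (hη₂ : IsTorpedoFunction q b η₂)
    (hδ₁b : η₁ b = δ₁) (hδ₂b : η₂ b = δ₂)
    (t : ℝ) (ht : t ∈ Set.Icc (0 : ℝ) 1) :
    IsTorpedoFunction q b (fun r => t * η₁ r + (1 - t) * η₂ r) ∧
    (fun r => t * η₁ r + (1 - t) * η₂ r) b = t * δ₁ + (1 - t) * δ₂ :=
  ⟨convex_setOf_isTorpedoFunction q b hη₁ hη₂ ht.1 (sub_nonneg.2 ht.2) (add_sub_cancel t 1),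
    by simp only [hδ₁b, hδ₂b]⟩

/-- The set of torpedo functions on `[0,b]` (of arbitrary positive radius) is convex:
a convex combination `t·η₁ + (1-t)·η₂` of torpedo functions of radii `δ₁ = η₁ b`
and `δ₂ = η₂ b` is again a torpedo function, of radius `t·δ₁ + (1-t)·δ₂`. -/
theorem torpedo_functions_convex (q : ℕ) (hq : 2 ≤ q) (b : ℝ) (hb : 0 < b)
    (η₁ η₂ : ℝ → ℝ) (δ₁ δ₂ : ℝ) (hδ₁ : 0 < δ₁) (hδ₂ : 0 < δ₂)
    (hη₁ : IsTorpedoFunction q b η₁) (hη₂ : IsTorpedoFunction q b η₂)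
    (hδ₁b : η₁ b = δ₁) (hδ₂b : η₂ b = δ₂)
    (t : ℝ) (ht : t ∈ Set.Icc (0 : ℝ) 1) :
    IsTorpedoFunction q b (fun r => t * η₁ r + (1 - t) * η₂ r) ∧
    (fun r => t * η₁ r + (1 - t) * η₂ r) b = t * δ₁ + (1 - t) * δ₂ :=
  torpedo_functions_convex_general q b η₁ η₂ δ₁ δ₂ hη₁ hη₂ hδ₁b hδ₂b t ht
end

section
/- Let n ≥ 3 be an integer, b > 0, and let β : ℝ → ℝ be a smooth function satisfying conditions (beta) on [0,b]. Then for every r ∈ (0,b), −2(n−1)·β''(r)/β(r) + (n−1)(n−2)·(1−β'(r)²)/β(r)² > 0. (This expression is the scalar curvature of the rotationally symmetric warped-product metric dr² + β(r)²ds²_{n−1}, so this metric on the sphere S^n has positive scalar curvature.) -/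
/-!
Since `β'' ≤ 0` on `[0, b]`, `β'` is antitone there, and it is strictly decreasing near both
endpoints because `β'' < 0` there. Hence `-1 = β'(b) < β'(r) < β'(0) = 1` for `0 < r < b`, so the
second term of the curvature is positive, while the first is nonnegative as `β'' ≤ 0 < β`.
-/

/-- Conditions (beta) for a smooth function `β : ℝ → ℝ` on `[0,b]`:
`β(0) = 0`, `β(b) = 0`, `β'(0) = 1`, `β'(b) = -1`, all even-order derivatives of
order `≥ 2` vanish at `0` and at `b`, `β'' ≤ 0` on `[0,b]`, `β'''(0) < 0`,
`β'''(b) > 0`, `β'' < 0` near (but not at) `0` and `b`, and `β > 0` on `(0,b)`. -/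
def BetaConditions (b : ℝ) (β : ℝ → ℝ) : Prop :=
  ContDiff ℝ (⊤ : ℕ∞) β ∧
  β 0 = 0 ∧ β b = 0 ∧
  deriv β 0 = 1 ∧ deriv β b = -1 ∧
  (∀ k : ℕ, 1 ≤ k → iteratedDeriv (2 * k) β 0 = 0 ∧ iteratedDeriv (2 * k) β b = 0) ∧
  (∀ r ∈ Set.Icc (0 : ℝ) b, iteratedDeriv 2 β r ≤ 0) ∧
  iteratedDeriv 3 β 0 < 0 ∧
  0 < iteratedDeriv 3 β b ∧
  (∃ ε > (0 : ℝ), (∀ r ∈ Set.Ioo (0 : ℝ) ε, iteratedDeriv 2 β r < 0) ∧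
    (∀ r ∈ Set.Ioo (b - ε) b, iteratedDeriv 2 β r < 0)) ∧
  (∀ r ∈ Set.Ioo (0 : ℝ) b, 0 < β r)

open Set

theorem iteratedDeriv_two (f : ℝ → ℝ) : iteratedDeriv 2 f = deriv (deriv f) := by
  rw [iteratedDeriv_succ, iteratedDeriv_one]

section Antitone

variable {g : ℝ → ℝ} {a b c r : ℝ}

theorem AntitoneOn.lt_left_of_strictAntiOn_Icc (hg : AntitoneOn g (Icc a b))
    (hgc : StrictAntiOn g (Icc a c)) (hac : a < c) (hr : r ∈ Ioc a b) : g r < g a := by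
  have ham : a < min c r := lt_min hac hr.1
  calc g r ≤ g (min c r) :=
        hg ⟨ham.le, (min_le_right c r).trans hr.2⟩ ⟨hr.1.le, hr.2⟩ (min_le_right c r)
    _ < g a := hgc ⟨le_rfl, hac.le⟩ ⟨ham.le, min_le_left c r⟩ ham

theorem AntitoneOn.lt_right_of_strictAntiOn_Icc (hg : AntitoneOn g (Icc a b))
    (hgc : StrictAntiOn g (Icc c b)) (hcb : c < b) (hr : r ∈ Ico a b) : g b < g r := by
  have hmb : max c r < b := max_lt hcb hr.2
  calc g b < g (max c r) := hgc ⟨le_max_left c r, hmb.le⟩ ⟨hcb.le, le_rfl⟩ hmb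
    _ ≤ g r := hg ⟨hr.1, hr.2.le⟩ ⟨hr.1.trans (le_max_right c r), hmb.le⟩ (le_max_right c r)

end Antitone

/-- The scalar curvature of the warped product metric `dr² + β(r)² ds²_{n-1}`. -/
noncomputable def warpedScalarCurvature (n : ℕ) (β : ℝ → ℝ) (r : ℝ) : ℝ :=
  -2 * ((n : ℝ) - 1) * deriv (deriv β) r / β r
    + ((n : ℝ) - 1) * ((n : ℝ) - 2) * (1 - (deriv β r) ^ 2) / (β r) ^ 2

theorem warpedScalarCurvature_pos {n : ℕ} {β : ℝ → ℝ} {r : ℝ} (hn : 3 ≤ n) (hβ : 0 < β r)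
    (hβ'' : deriv (deriv β) r ≤ 0) (hβ' : deriv β r ^ 2 < 1) :
    0 < warpedScalarCurvature n β r := by
  have hn' : (3 : ℝ) ≤ n := by exact_mod_cast hn
  have hconcave : 0 ≤ -2 * ((n : ℝ) - 1) * deriv (deriv β) r / β r :=
    div_nonneg (by nlinarith) hβ.le
  have hsphere : 0 < ((n : ℝ) - 1) * ((n : ℝ) - 2) * (1 - (deriv β r) ^ 2) / (β r) ^ 2 :=
    div_pos (mul_pos (mul_pos (by linarith) (by linarith)) (by linarith)) (pow_pos hβ 2)
  unfold warpedScalarCurvature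
  linarith

namespace BetaConditions

variable {b : ℝ} {β : ℝ → ℝ}

theorem deriv_zero (hβ : BetaConditions b β) : deriv β 0 = 1 := hβ.2.2.2.1

theorem deriv_right (hβ : BetaConditions b β) : deriv β b = -1 := hβ.2.2.2.2.1

theorem pos (hβ : BetaConditions b β) {r : ℝ} (hr : r ∈ Ioo 0 b) : 0 < β r :=
  hβ.2.2.2.2.2.2.2.2.2.2 r hr

theorem differentiable_deriv (hβ : BetaConditions b β) : Differentiable ℝ (deriv β) :=
  ((contDiff_infty_iff_deriv.mp hβ.1).2).differentiable (by simp)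

theorem deriv_deriv_nonpos (hβ : BetaConditions b β) {r : ℝ} (hr : r ∈ Icc 0 b) :
    deriv (deriv β) r ≤ 0 :=
  iteratedDeriv_two β ▸ hβ.2.2.2.2.2.2.1 r hr

theorem antitoneOn_deriv (hβ : BetaConditions b β) : AntitoneOn (deriv β) (Icc 0 b) :=
  antitoneOn_of_deriv_nonpos (convex_Icc 0 b) hβ.differentiable_deriv.continuous.continuousOn
    hβ.differentiable_deriv.differentiableOn
    fun _ hx ↦ hβ.deriv_deriv_nonpos (interior_subset hx)

theorem exists_strictAntiOn_deriv (hβ : BetaConditions b β) :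
    ∃ ε > 0, StrictAntiOn (deriv β) (Icc 0 ε) ∧ StrictAntiOn (deriv β) (Icc (b - ε) b) := by
  obtain ⟨ε, hε, hnear0, hnearb⟩ := hβ.2.2.2.2.2.2.2.2.2.1
  have hcont := hβ.differentiable_deriv.continuous
  refine ⟨ε, hε, strictAntiOn_of_deriv_neg (convex_Icc _ _) hcont.continuousOn ?_,
    strictAntiOn_of_deriv_neg (convex_Icc _ _) hcont.continuousOn ?_⟩
  · intro x hx
    rw [interior_Icc] at hx
    exact iteratedDeriv_two β ▸ hnear0 x hx
  · intro x hx
    rw [interior_Icc] at hx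
    exact iteratedDeriv_two β ▸ hnearb x hx

theorem sq_deriv_lt_one (hβ : BetaConditions b β) {r : ℝ} (hr : r ∈ Ioo 0 b) :
    deriv β r ^ 2 < 1 := by
  obtain ⟨ε, hε, hstrict0, hstrictb⟩ := hβ.exists_strictAntiOn_deriv
  have hlt : deriv β r < 1 :=
    hβ.deriv_zero ▸ hβ.antitoneOn_deriv.lt_left_of_strictAntiOn_Icc hstrict0 hε ⟨hr.1, hr.2.le⟩
  have hgt : -1 < deriv β r :=
    hβ.deriv_right ▸ hβ.antitoneOn_deriv.lt_right_of_strictAntiOn_Icc hstrictb (by linarith)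
      ⟨hr.1.le, hr.2⟩
  nlinarith

end BetaConditions

theorem psc_of_betaConditions_general (n : ℕ) (hn : 3 ≤ n) (b : ℝ)
    (β : ℝ → ℝ) (hβ : BetaConditions b β) :
    ∀ r ∈ Set.Ioo (0 : ℝ) b,
      0 < -2 * ((n : ℝ) - 1) * deriv (deriv β) r / β r
          + ((n : ℝ) - 1) * ((n : ℝ) - 2) * (1 - (deriv β r) ^ 2) / (β r) ^ 2 := fun _ hr ↦
  warpedScalarCurvature_pos hn (hβ.pos hr)
    (hβ.deriv_deriv_nonpos (Ioo_subset_Icc_self hr)) (hβ.sq_deriv_lt_one hr)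

/-- For `n ≥ 3` and `β` satisfying conditions (beta) on `[0,b]`, the scalar curvature
`-2(n-1)β''(r)/β(r) + (n-1)(n-2)(1-β'(r)²)/β(r)²` of the rotationally symmetric
warped product metric `dr² + β(r)² ds²_{n-1}` on `Sⁿ` is positive on `(0,b)`. -/
theorem psc_of_betaConditions (n : ℕ) (hn : 3 ≤ n) (b : ℝ) (hb : 0 < b)
    (β : ℝ → ℝ) (hβ : BetaConditions b β) :
    ∀ r ∈ Set.Ioo (0 : ℝ) b,
      0 < -2 * ((n : ℝ) - 1) * deriv (deriv β) r / β r
          + ((n : ℝ) - 1) * ((n : ℝ) - 2) * (1 - (deriv β r) ^ 2) / (β r) ^ 2 :=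
  psc_of_betaConditions_general n hn b β hβ
end

section
/- Let E be Euclidean space ℝ^n, let c ∈ ℝ, and let α, β : ℝ → ℝ be differentiable at r ∈ ℝ with α'(r)² + β'(r)² = 1. Define G : ℝ × E × ℝ → ℝ × E × ℝ by G(t, x, l) = ((c + α(t))·cos l, β(t)·x, (c + α(t))·sin l). Then G is differentiable at any point (r, θ, l), and if ‖θ‖ = 1 and ⟨θ, w⟩ = 0, then for all s, m ∈ ℝ, writing (u₀, u, u₁) for the image of (s, w, m) under the derivative of G at (r, θ, l), one has u₀² + ‖u‖² + u₁² = s² + β(r)²·‖w‖² + (c + α(r))²·m². (That is, the composition bend∘cyl pulls back the Euclidean metric to the bent cylinder metric dr² + β(r)²·ds²_{n−1} + (c + α(r))²·dl².) -/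
/-!
With `ρ = c + α`, the derivative of `G (t, x, l) = (ρ t cos l, β t • x, ρ t sin l)` at `(r, θ, l)`
sends `(s, w, m)` to `β r • w + (s β') • θ` in the middle and, in the plane of the outer two
coordinates, to the vector `(s ρ', ρ r m)` rotated by the angle `l`. The rotation preserves
`(s ρ')² + (ρ r m)²`, and Pythagoras (`w ⊥ θ`, `‖θ‖ = 1`) gives
`‖β r • w + (s β') • θ‖² = β r² ‖w‖² + (s β')²`. Summing, `ρ'² + β'² = 1` collapses
`(s ρ')² + (s β')²` to `s²`.
-/

open Real

section BendCyl

variable {E : Type*} [NormedAddCommGroup E] [NormedSpace ℝ E]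

noncomputable def bendCyl (ρ β : ℝ → ℝ) (p : ℝ × E × ℝ) : ℝ × E × ℝ :=
  (ρ p.1 * cos p.2.2, β p.1 • p.2.1, ρ p.1 * sin p.2.2)

theorem hasFDerivAt_bendCyl {ρ β : ℝ → ℝ} {ρ' β' r : ℝ}
    (hρ : HasDerivAt ρ ρ' r) (hβ : HasDerivAt β β' r) (x : E) (l : ℝ) :
    ∃ G' : ℝ × E × ℝ →L[ℝ] ℝ × E × ℝ, HasFDerivAt (bendCyl ρ β) G' (r, x, l) ∧
      ∀ s w m, G' (s, w, m) = (s * ρ' * cos l - ρ r * m * sin l, β r • w + (s * β') • x,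
        s * ρ' * sin l + ρ r * m * cos l) := by
  have ht : HasFDerivAt (fun p : ℝ × E × ℝ => p.1)
      (ContinuousLinearMap.fst ℝ ℝ (E × ℝ)) (r, x, l) := hasFDerivAt_fst
  have hx : HasFDerivAt (fun p : ℝ × E × ℝ => p.2.1)
      ((ContinuousLinearMap.fst ℝ E ℝ).comp (ContinuousLinearMap.snd ℝ ℝ (E × ℝ))) (r, x, l) :=
    hasFDerivAt_fst.comp _ hasFDerivAt_snd
  have hl : HasFDerivAt (fun p : ℝ × E × ℝ => p.2.2)
      ((ContinuousLinearMap.snd ℝ E ℝ).comp (ContinuousLinearMap.snd ℝ ℝ (E × ℝ))) (r, x, l) :=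
    hasFDerivAt_snd.comp _ hasFDerivAt_snd
  have hρt := hρ.comp_hasFDerivAt _ ht
  have hβt := hβ.comp_hasFDerivAt _ ht
  have hcos := (hasDerivAt_cos l).comp_hasFDerivAt (r, x, l) hl
  have hsin := (hasDerivAt_sin l).comp_hasFDerivAt (r, x, l) hl
  refine ⟨_, (hρt.mul hcos).prodMk ((hβt.smul hx).prodMk (hρt.mul hsin)), ?_⟩
  intro s w m
  simp only [ContinuousLinearMap.prod_apply, add_apply, smul_apply,
    ContinuousLinearMap.comp_apply, ContinuousLinearMap.smulRight_apply,
    ContinuousLinearMap.coe_fst', ContinuousLinearMap.coe_snd', Function.comp_apply, smul_eq_mul,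
    Prod.mk.injEq]
  exact ⟨by ring, by rw [mul_comm s β', add_comm], by ring⟩

theorem differentiableAt_bendCyl {ρ β : ℝ → ℝ} {r : ℝ} (hρ : DifferentiableAt ℝ ρ r)
    (hβ : DifferentiableAt ℝ β r) (x : E) (l : ℝ) :
    DifferentiableAt ℝ (bendCyl ρ β) (r, x, l) :=
  (hasFDerivAt_bendCyl hρ.hasDerivAt hβ.hasDerivAt x l).choose_spec.1.differentiableAt

theorem norm_smul_add_smul_sq_of_inner_eq_zero {F : Type*} [NormedAddCommGroup F]
    [InnerProductSpace ℝ F] {x y : F} (h : inner ℝ x y = 0) (a b : ℝ) :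
    ‖a • x + b • y‖ ^ 2 = a ^ 2 * ‖x‖ ^ 2 + b ^ 2 * ‖y‖ ^ 2 := by
  have hab : inner ℝ (a • x) (b • y) = 0 := by
    rw [real_inner_smul_left, real_inner_smul_right, h, mul_zero, mul_zero]
  rw [sq, norm_add_sq_eq_norm_sq_add_norm_sq_real hab, norm_smul, norm_smul, norm_eq_abs,
    norm_eq_abs, ← sq_abs a, ← sq_abs b]
  ring

theorem rotate_sq_add_sq (a b l : ℝ) :
    (a * cos l - b * sin l) ^ 2 + (a * sin l + b * cos l) ^ 2 = a ^ 2 + b ^ 2 := by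
  linear_combination (a ^ 2 + b ^ 2) * sin_sq_add_cos_sq l

theorem bendCyl_fderiv_sq_norm {F : Type*} [NormedAddCommGroup F] [InnerProductSpace ℝ F]
    {ρ β : ℝ → ℝ} {ρ' β' r : ℝ} (hρ : HasDerivAt ρ ρ' r) (hβ : HasDerivAt β β' r)
    (hunit : ρ' ^ 2 + β' ^ 2 = 1) {x w : F} (hx : ‖x‖ = 1) (hxw : inner ℝ x w = 0) (l s m : ℝ) :
    (fderiv ℝ (bendCyl ρ β) (r, x, l) (s, w, m)).1 ^ 2
        + ‖(fderiv ℝ (bendCyl ρ β) (r, x, l) (s, w, m)).2.1‖ ^ 2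
        + (fderiv ℝ (bendCyl ρ β) (r, x, l) (s, w, m)).2.2 ^ 2
      = s ^ 2 + β r ^ 2 * ‖w‖ ^ 2 + ρ r ^ 2 * m ^ 2 := by
  obtain ⟨G', hG', hG'_apply⟩ := hasFDerivAt_bendCyl hρ hβ x l
  rw [hG'.fderiv, hG'_apply,
    norm_smul_add_smul_sq_of_inner_eq_zero (real_inner_comm x w ▸ hxw), hx]
  linear_combination rotate_sq_add_sq (s * ρ') (ρ r * m) l + s ^ 2 * hunit

end BendCyl

/-- Let `α, β` be differentiable at `r` with `α'(r)² + β'(r)² = 1`, `c ∈ ℝ`, and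
`G (t, x, l) = ((c + α t) cos l, β t • x, (c + α t) sin l)` (the composition
`bend ∘ cyl`).  Then `G` is differentiable at any `(r, θ, l)`, and if `‖θ‖ = 1` and
`⟨θ, w⟩ = 0` then the image `(u₀, u, u₁)` of a tangent vector `(s, w, m)` under the
derivative of `G` satisfies `u₀² + ‖u‖² + u₁² = s² + β(r)²‖w‖² + (c + α(r))²·m²`;
i.e. `bend ∘ cyl` pulls back the Euclidean metric to the bent cylinder metric
`dr² + β(r)² ds²_{n-1} + (c + α(r))² dl²`. -/
theorem bend_cyl_pullback_metric (n : ℕ) (c : ℝ) (α β : ℝ → ℝ) (r : ℝ)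
    (hα : DifferentiableAt ℝ α r) (hβ : DifferentiableAt ℝ β r)
    (hunit : (deriv α r) ^ 2 + (deriv β r) ^ 2 = 1)
    (θ : EuclideanSpace ℝ (Fin n)) (l : ℝ)
    (G : ℝ × EuclideanSpace ℝ (Fin n) × ℝ → ℝ × EuclideanSpace ℝ (Fin n) × ℝ)
    (hG : G = fun p => (((c + α p.1) * Real.cos p.2.2 : ℝ),
      (β p.1 • p.2.1 : EuclideanSpace ℝ (Fin n)), ((c + α p.1) * Real.sin p.2.2 : ℝ))) :
    DifferentiableAt ℝ G (r, θ, l) ∧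
    (‖θ‖ = 1 → ∀ w : EuclideanSpace ℝ (Fin n), (inner ℝ θ w : ℝ) = 0 → ∀ s m : ℝ,
      ((fderiv ℝ G (r, θ, l)) (s, w, m)).1 ^ 2
        + ‖((fderiv ℝ G (r, θ, l)) (s, w, m)).2.1‖ ^ 2
        + ((fderiv ℝ G (r, θ, l)) (s, w, m)).2.2 ^ 2
      = s ^ 2 + (β r) ^ 2 * ‖w‖ ^ 2 + (c + α r) ^ 2 * m ^ 2) := by
  have hρ : HasDerivAt (fun t => c + α t) (deriv α r) r := hα.hasDerivAt.const_add c
  subst hG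
  exact ⟨differentiableAt_bendCyl hρ.differentiableAt hβ θ l, fun hθ w hw s m =>
    bendCyl_fderiv_sq_norm hρ hβ.hasDerivAt hunit hθ hw l s m⟩
end

section
/- Let b > 0 and let β : ℝ → ℝ be a smooth function satisfying conditions (beta) on [0,b]. Define α : ℝ → ℝ by α(r) = α₀ − ∫₀^r √(1 − β'(u)²) du, where α₀ = ∫₀^b √(1 − β'(u)²) du. Then −1 < β'(r) < 1 for every r ∈ (0,b), and α is strictly decreasing on [0,b]. -/
/-!
Since `β'' ≤ 0` on `[0,b]`, `β'` is antitone there, and it is strictly decreasing on short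
intervals at both ends, where `β'' < 0`. Hence `β'` drops strictly below `β'(0) = 1` immediately
after `0` and stays strictly above `β'(b) = -1` until `b`. So the integrand `√(1 - β'²)` of `α`
is positive on `(0,b)`, and `α` is strictly decreasing on `[0,b]`.
-/

open Set

lemma lt_apply_left_of_deriv_neg_near_left {f : ℝ → ℝ} {a c ε r : ℝ}
    (hf : ContinuousOn f (Icc a c)) (hf' : DifferentiableOn ℝ f (Ioo a c))
    (hle : ∀ x ∈ Ioo a c, deriv f x ≤ 0) (hε : 0 < ε)
    (hlt : ∀ x ∈ Ioo a (a + ε), deriv f x < 0) (hr : r ∈ Ioc a c) : f r < f a := by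
  set d := min (a + ε) r
  have had : a < d := lt_min (by linarith) hr.1
  have hdr : d ≤ r := min_le_right _ _
  have hanti : AntitoneOn f (Icc a c) :=
    antitoneOn_of_deriv_nonpos (convex_Icc a c) hf (by rwa [interior_Icc])
      (by rwa [interior_Icc])
  have hstrict : StrictAntiOn f (Icc a d) :=
    strictAntiOn_of_deriv_neg (convex_Icc a d) (hf.mono (Icc_subset_Icc_right (hdr.trans hr.2)))
      fun x hx => by
        rw [interior_Icc] at hx
        exact hlt x ⟨hx.1, hx.2.trans_le (min_le_left _ _)⟩
  calc f r ≤ f d := hanti ⟨had.le, hdr.trans hr.2⟩ ⟨hr.1.le, hr.2⟩ hdr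
    _ < f a := hstrict (left_mem_Icc.2 had.le) (right_mem_Icc.2 had.le) had

lemma apply_right_lt_of_deriv_neg_near_right {f : ℝ → ℝ} {a c ε r : ℝ}
    (hf : ContinuousOn f (Icc a c)) (hf' : DifferentiableOn ℝ f (Ioo a c))
    (hle : ∀ x ∈ Ioo a c, deriv f x ≤ 0) (hε : 0 < ε)
    (hlt : ∀ x ∈ Ioo (c - ε) c, deriv f x < 0) (hr : r ∈ Ico a c) : f c < f r := by
  set d := max (c - ε) r
  have hdc : d < c := max_lt (by linarith) hr.2
  have hrd : r ≤ d := le_max_right _ _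
  have hanti : AntitoneOn f (Icc a c) :=
    antitoneOn_of_deriv_nonpos (convex_Icc a c) hf (by rwa [interior_Icc])
      (by rwa [interior_Icc])
  have hstrict : StrictAntiOn f (Icc d c) :=
    strictAntiOn_of_deriv_neg (convex_Icc d c) (hf.mono (Icc_subset_Icc_left (hr.1.trans hrd)))
      fun x hx => by
        rw [interior_Icc] at hx
        exact hlt x ⟨(le_max_left _ _).trans_lt hx.1, hx.2⟩
  calc f c < f d := hstrict (left_mem_Icc.2 hdc.le) (right_mem_Icc.2 hdc.le) hdc
    _ ≤ f r := hanti ⟨hr.1, hr.2.le⟩ ⟨hr.1.trans hrd, hdc.le⟩ hrd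

lemma strictMonoOn_intervalIntegral_of_pos {g : ℝ → ℝ} {a b : ℝ} (c : ℝ) (hg : Continuous g)
    (hpos : ∀ x ∈ Ioo a b, 0 < g x) : StrictMonoOn (fun r => ∫ u in c..r, g u) (Icc a b) := by
  intro x hx y hy hxy
  have hxy_pos : 0 < ∫ u in x..y, g u :=
    intervalIntegral.intervalIntegral_pos_of_pos_on (hg.intervalIntegrable x y)
      (fun t ht => hpos t ⟨hx.1.trans_lt ht.1, ht.2.trans_le hy.2⟩) hxy
  have hsplit := intervalIntegral.integral_interval_sub_left
    (hg.intervalIntegrable (μ := MeasureTheory.volume) c y) (hg.intervalIntegrable c x)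
  simp only
  linarith

lemma BetaConditions.deriv_mem_Ioo {b : ℝ} {β : ℝ → ℝ} (hβ : BetaConditions b β) {r : ℝ}
    (hr : r ∈ Ioo 0 b) : deriv β r ∈ Ioo (-1) 1 := by
  obtain ⟨hsmooth, -, -, hd0, hdb, -, hconc, -, -, ⟨ε, hε, hε0, hεb⟩, -⟩ := hβ
  have h2 : iteratedDeriv 2 β = deriv (deriv β) := by rw [iteratedDeriv_succ, iteratedDeriv_one]
  rw [h2] at hconc hε0 hεb
  have hd : Differentiable ℝ (deriv β) := (hsmooth.of_le (WithTop.coe_le_coe.2 le_top)).differentiable_deriv_two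
  have hle : ∀ x ∈ Ioo 0 b, deriv (deriv β) x ≤ 0 := fun x hx => hconc x (Ioo_subset_Icc_self hx)
  constructor
  · simpa [hdb] using apply_right_lt_of_deriv_neg_near_right hd.continuous.continuousOn
      hd.differentiableOn hle hε hεb (Ioo_subset_Ico_self hr)
  · simpa [hd0] using lt_apply_left_of_deriv_neg_near_left hd.continuous.continuousOn
      hd.differentiableOn hle hε (fun x hx => hε0 x (by simpa using hx)) (Ioo_subset_Ioc_self hr)

theorem alpha_strictAnti_general (b : ℝ) (β : ℝ → ℝ) (hβ : BetaConditions b β)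
    (α : ℝ → ℝ)
    (hα : α = fun r => (∫ u in (0 : ℝ)..b, Real.sqrt (1 - (deriv β u) ^ 2))
      - ∫ u in (0 : ℝ)..r, Real.sqrt (1 - (deriv β u) ^ 2)) :
    (∀ r ∈ Set.Ioo (0 : ℝ) b, -1 < deriv β r ∧ deriv β r < 1) ∧
    StrictAntiOn α (Set.Icc (0 : ℝ) b) := by
  have hbound : ∀ r ∈ Ioo 0 b, -1 < deriv β r ∧ deriv β r < 1 := fun r hr => hβ.deriv_mem_Ioo hr
  refine ⟨hbound, ?_⟩
  have hcont : Continuous fun u => √(1 - deriv β u ^ 2) := by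
    have hβ' : Continuous (deriv β) := hβ.1.continuous_deriv (by simp)
    fun_prop
  have hpos : ∀ u ∈ Ioo 0 b, 0 < √(1 - deriv β u ^ 2) := fun u hu =>
    Real.sqrt_pos.2 (by nlinarith [hbound u hu])
  intro x hx y hy hxy
  subst hα
  simp only
  linarith [strictMonoOn_intervalIntegral_of_pos 0 hcont hpos hx hy hxy]

/-- For `β` satisfying conditions (beta) on `[0,b]` and
`α(r) = α₀ - ∫₀^r √(1 - β'(u)²) du` with `α₀ = ∫₀^b √(1 - β'(u)²) du`, one has
`-1 < β'(r) < 1` for every `r ∈ (0,b)`, and `α` is strictly decreasing on `[0,b]`. -/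
theorem alpha_strictAnti (b : ℝ) (hb : 0 < b) (β : ℝ → ℝ) (hβ : BetaConditions b β)
    (α : ℝ → ℝ)
    (hα : α = fun r => (∫ u in (0 : ℝ)..b, Real.sqrt (1 - (deriv β u) ^ 2))
      - ∫ u in (0 : ℝ)..r, Real.sqrt (1 - (deriv β u) ^ 2)) :
    (∀ r ∈ Set.Ioo (0 : ℝ) b, -1 < deriv β r ∧ deriv β r < 1) ∧
    StrictAntiOn α (Set.Icc (0 : ℝ) b) :=
  alpha_strictAnti_general b β hβ α hα
end
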